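/- arXiv:2011.02203 — 4 statements merged into one kernel-verified Lean document; each statement's English description precedes it below -/
import Mathlib

section
/- Let X have density p with E|X| < ∞, and let h satisfy E|h(X)| < ∞. Define (τ_P ∘ h)(x) = p(x)^{-1} ∫_{-∞}^x (E[h(X)] - h(y)) p(y) dy. Then for any differentiable function φ with E[|(τ_P ∘ h)(X) φ'(X)|] < ∞, one has E[(τ_P ∘ h)(X) φ'(X)] = E[(h(X) - E[h(X)]) φ(X)]. -/
/-!
Write `q = (μh - h) p` and `g x = ∫_{-∞}^x q`, so that `g = τh p`, `∫ q = 0` and the claim reads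
`∫ (g φ' + q φ) = 0`. On a compact interval where `g` does not vanish, `φ' = (g φ') / g` is
integrable, so `g` and `φ` are absolutely continuous there and the integrand is `(g φ)'` a.e.
Hence the integral over a connected component of the open set `{g ≠ 0}` is the difference of the
limits of `g φ` at its two ends. At a finite end `g = 0`. At an infinite end the limit `L` exists
and must be `0`: otherwise, for large `x`, `|g φ| ≥ |L| / 2` and `|g| ≤ ∫_x^∞ |q|` on `[x, ∞)`
give `∫_x^∞ |q φ| ≥ |L| / 2`, against the integrability of `q φ`. On `{g = 0}` the integrand
vanishes a.e., since `q = g'` a.e. and `g'` vanishes at the accumulation points of a level set.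
-/

open MeasureTheory Set Filter Topology

section OrdConnected

variable {α : Type*} [ConditionallyCompleteLinearOrder α] {s : Set α} {x : α}

theorem Set.OrdConnected.inter_Ioi_eq_Ioo_csSup (hs : s.OrdConnected) (hx : x ∈ s)
    (hbdd : BddAbove s) (hsup : sSup s ∉ s) : s ∩ Ioi x = Ioo x (sSup s) := by
  ext y
  refine ⟨fun hy => ⟨hy.2, (le_csSup hbdd hy.1).lt_of_ne fun h => hsup (h ▸ hy.1)⟩, fun hy => ?_⟩
  obtain ⟨c, hc, hyc⟩ := exists_lt_of_lt_csSup ⟨x, hx⟩ hy.2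
  exact ⟨hs.out hx hc ⟨hy.1.le, hyc.le⟩, hy.1⟩

theorem Set.OrdConnected.inter_Iic_eq_Ioc_csInf (hs : s.OrdConnected) (hx : x ∈ s)
    (hbdd : BddBelow s) (hinf : sInf s ∉ s) : s ∩ Iic x = Ioc (sInf s) x := by
  ext y
  refine ⟨fun hy => ⟨(csInf_le hbdd hy.1).lt_of_ne fun h => hinf (h ▸ hy.1), hy.2⟩, fun hy => ?_⟩
  obtain ⟨c, hc, hcy⟩ := exists_lt_of_csInf_lt ⟨x, hx⟩ hy.1
  exact ⟨hs.out hc hx ⟨hcy.le, hy.2⟩, hy.2⟩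

theorem Set.OrdConnected.Ioi_subset_of_not_bddAbove (hs : s.OrdConnected) (hx : x ∈ s)
    (hbdd : ¬BddAbove s) : Ioi x ⊆ s := fun y hy =>
  let ⟨_, hc, hyc⟩ := not_bddAbove_iff.1 hbdd y
  hs.out hx hc ⟨hy.le, hyc.le⟩

theorem Set.OrdConnected.Iic_subset_of_not_bddBelow (hs : s.OrdConnected) (hx : x ∈ s)
    (hbdd : ¬BddBelow s) : Iic x ⊆ s := fun y hy =>
  let ⟨_, hc, hcy⟩ := not_bddBelow_iff.1 hbdd y
  hs.out hc hx ⟨hcy.le, hy⟩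

variable [TopologicalSpace α] [OrderTopology α] [DenselyOrdered α]

theorem IsOpen.csSup_notMem [NoMaxOrder α] (hs : IsOpen s) (hbdd : BddAbove s) : sSup s ∉ s :=
  fun h => let ⟨_, hlt, hy⟩ := Eventually.exists_gt (hs.mem_nhds h)
  (le_csSup hbdd hy).not_gt hlt

theorem IsOpen.csInf_notMem [NoMinOrder α] (hs : IsOpen s) (hbdd : BddBelow s) : sInf s ∉ s :=
  fun h => let ⟨_, hlt, hy⟩ := Eventually.exists_lt (hs.mem_nhds h)
  (csInf_le hbdd hy).not_gt hlt

end OrdConnected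

theorem IsOpen.mem_connectedComponentIn_of_mem_closure {X : Type*} [TopologicalSpace X]
    [LocallyConnectedSpace X] {V : Set X} (hV : IsOpen V) {x y : X}
    (hy : y ∈ closure (connectedComponentIn V x)) (hyV : y ∈ V) :
    y ∈ connectedComponentIn V x := by
  obtain ⟨z, hzy, hzx⟩ :=
    mem_closure_iff_nhds.1 hy _ (connectedComponentIn_mem_nhds (hV.mem_nhds hyV))
  rw [connectedComponentIn_eq hzx, ← connectedComponentIn_eq hzy]
  exact mem_connectedComponentIn hyV

theorem IsOpen.setIntegral_eq_zero_of_connectedComponentIn {X E : Type*} [TopologicalSpace X]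
    [TopologicalSpace.SeparableSpace X] [LocallyConnectedSpace X] [MeasurableSpace X]
    [OpensMeasurableSpace X]
    [NormedAddCommGroup E] [NormedSpace ℝ E] {μ : Measure X} {V : Set X} (hV : IsOpen V)
    {f : X → E} (hf : IntegrableOn f V μ)
    (h : ∀ x ∈ V, ∫ y in connectedComponentIn V x, f y ∂μ = 0) :
    ∫ y in V, f y ∂μ = 0 := by
  set T := connectedComponentIn V '' V
  have hdisj : T.PairwiseDisjoint id := by
    rintro _ ⟨x, -, rfl⟩ _ ⟨x', -, rfl⟩ hne
    refine Set.disjoint_left.2 fun y hy hy' => hne ?_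
    rw [connectedComponentIn_eq hy, connectedComponentIn_eq hy']
  have hcount : T.Countable := hdisj.countable_of_isOpen
    (by rintro _ ⟨x, -, rfl⟩; exact hV.connectedComponentIn)
    (by rintro _ ⟨x, hx, rfl⟩; exact ⟨x, mem_connectedComponentIn hx⟩)
  have hunion : ⋃ C : T, (C : Set X) = V := by
    refine Subset.antisymm (iUnion_subset ?_) fun x hx => mem_iUnion.2 ?_
    · rintro ⟨_, x, -, rfl⟩
      exact connectedComponentIn_subset _ _
    · exact ⟨⟨_, x, hx, rfl⟩, mem_connectedComponentIn hx⟩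
  have : Countable T := hcount.to_subtype
  have hmeas : ∀ C : T, MeasurableSet (C : Set X) := by
    rintro ⟨_, x, -, rfl⟩
    exact hV.connectedComponentIn.measurableSet
  rw [← hunion, integral_iUnion hmeas
    (fun C C' hne => hdisj C.2 C'.2 (Subtype.coe_injective.ne hne)) (hunion ▸ hf)]
  convert tsum_zero with C
  obtain ⟨_, x, hx, rfl⟩ := C
  exact h x hx

theorem ae_eq_zero_of_hasDerivAt_of_eq {E : Type*} [NormedAddCommGroup E] [NormedSpace ℝ E]
    {f f' : ℝ → E} (hf : ∀ᵐ x, HasDerivAt f (f' x) x) (c : E) :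
    ∀ᵐ x, f x = c → f' x = 0 := by
  set Z := {x | f x = c}
  filter_upwards [hf, (countable_setOfPred_isolated_right_within (s := Z)).ae_notMem volume]
    with x hfx hacc hxZ
  have : (𝓝[Z ∩ Ioi x] x).NeBot := ⟨fun h => hacc ⟨hxZ, h⟩⟩
  have hslope : slope f x =ᶠ[𝓝[Z ∩ Ioi x] x] fun _ => 0 :=
    eventually_nhdsWithin_of_forall fun y (hy : f y = c ∧ _) => by simp [slope, hy.1, hxZ]
  refine tendsto_nhds_unique ?_ (tendsto_const_nhds.congr' hslope.symm)
  exact (hasDerivAt_iff_tendsto_slope.1 hfx).mono_left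
    (nhdsWithin_mono _ fun y hy => ne_of_gt hy.2)

theorem AbsolutelyContinuousOnInterval.congr {X : Type*} [PseudoMetricSpace X] {f g : ℝ → X}
    {a b : ℝ} (hf : AbsolutelyContinuousOnInterval f a b) (hfg : EqOn f g (uIcc a b)) :
    AbsolutelyContinuousOnInterval g a b :=
  Tendsto.congr' (eventually_inf_principal.2 <| .of_forall fun _ hE =>
    Finset.sum_congr rfl fun i hi => by rw [hfg (hE.1 i hi).1, hfg (hE.1 i hi).2]) hf

theorem IntervalIntegrable.absolutelyContinuousOnInterval_const_add_intervalIntegral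
    {f : ℝ → ℝ} {a b c : ℝ} (hf : IntervalIntegrable f volume a b) (hc : c ∈ uIcc a b) (C : ℝ) :
    AbsolutelyContinuousOnInterval (fun x => C + ∫ t in c..x, f t) a b :=
  contDiffOn_const.absolutelyContinuousOnInterval.fun_add
    (hf.absolutelyContinuousOnInterval_intervalIntegral hc)

theorem absolutelyContinuousOnInterval_of_hasDerivAt {f f' : ℝ → ℝ} {a b : ℝ}
    (hf : ∀ x ∈ uIcc a b, HasDerivAt f (f' x) x) (hf' : IntervalIntegrable f' volume a b) :
    AbsolutelyContinuousOnInterval f a b := by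
  refine (hf'.absolutelyContinuousOnInterval_const_add_intervalIntegral left_mem_uIcc (f a)).congr
    fun x hx => ?_
  have hsub : uIcc a x ⊆ uIcc a b := uIcc_subset_uIcc left_mem_uIcc hx
  dsimp only
  rw [intervalIntegral.integral_eq_sub_of_hasDerivAt (fun y hy => hf y (hsub hy))
    (hf'.mono_set hsub), add_sub_cancel]

theorem tendsto_setIntegral_Ioi_atTop_zero {E : Type*} [NormedAddCommGroup E] [NormedSpace ℝ E]
    {f : ℝ → E} (hf : Integrable f) :
    Tendsto (fun x => ∫ y in Ioi x, f y) atTop (𝓝 0) := by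
  have hempty : ⋂ x : ℝ, Ioi x = ∅ :=
    eq_empty_of_forall_notMem fun y hy => lt_irrefl y (mem_iInter.1 hy y)
  simpa [hempty] using tendsto_setIntegral_of_antitone (fun _ => measurableSet_Ioi)
    (fun _ _ hxy => Ioi_subset_Ioi hxy) ⟨0, hf.integrableOn⟩

theorem eq_zero_of_tendsto_setIntegral_Ioi_mul_atTop {q φ : ℝ → ℝ} (hq : Integrable q)
    (hqφ : Integrable fun x => q x * φ x) {L : ℝ}
    (hL : Tendsto (fun x => (∫ y in Ioi x, q y) * φ x) atTop (𝓝 L)) : L = 0 := by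
  by_contra hL0
  have hδ : 0 < |L| / 2 := by positivity
  obtain ⟨M, hM⟩ := eventually_atTop.1 <|
    hL.abs.eventually (eventually_ge_nhds (half_lt_self (abs_pos.2 hL0)))
  have hbound : ∀ x ≥ M, |L| / 2 ≤ ∫ y in Ioi x, |q y * φ y| := by
    intro x hx
    have hW : ∀ y ∈ Ioi x, |∫ t in Ioi y, q t| ≤ ∫ t in Ioi x, |q t| := fun y hy =>
      abs_integral_le_integral_abs.trans <| setIntegral_mono_set hq.abs.integrableOn
        (ae_of_all _ fun _ => abs_nonneg _) (Ioi_subset_Ioi hy.le).eventuallyLE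
    have hpt : ∀ y ∈ Ioi x, |L| / 2 * |q y| ≤ (∫ t in Ioi x, |q t|) * |q y * φ y| := by
      intro y hy
      have := hM y (hx.trans hy.le)
      rw [abs_mul] at this ⊢
      calc |L| / 2 * |q y| ≤ |∫ t in Ioi y, q t| * |φ y| * |q y| := by gcongr
        _ ≤ (∫ t in Ioi x, |q t|) * (|q y| * |φ y|) := by
          rw [mul_right_comm, mul_assoc]; gcongr; exact hW y hy
    have hmono : |L| / 2 * ∫ t in Ioi x, |q t| ≤
        (∫ t in Ioi x, |q t|) * ∫ y in Ioi x, |q y * φ y| := by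
      rw [← integral_const_mul, ← integral_const_mul]
      exact setIntegral_mono_on (hq.abs.integrableOn.const_mul _)
        (hqφ.abs.integrableOn.const_mul _) measurableSet_Ioi hpt
    have hWpos : 0 < ∫ t in Ioi x, |q t| := by
      have h1 := hM (x + 1) (by linarith)
      have h2 := hW (x + 1) (by simp)
      rw [abs_mul] at h1
      by_contra h0
      nlinarith [abs_nonneg (φ (x + 1)), abs_nonneg (∫ t in Ioi (x + 1), q t)]
    exact le_of_mul_le_mul_left (by linarith) hWpos
  exact absurd (ge_of_tendsto (tendsto_setIntegral_Ioi_atTop_zero hqφ.abs)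
    (eventually_atTop.2 ⟨M, hbound⟩)) (not_le.2 hδ)

theorem eq_zero_of_tendsto_setIntegral_Iic_mul_atBot {q φ : ℝ → ℝ} (hq : Integrable q)
    (hqφ : Integrable fun x => q x * φ x) {L : ℝ}
    (hL : Tendsto (fun x => (∫ y in Iic x, q y) * φ x) atBot (𝓝 L)) : L = 0 := by
  refine eq_zero_of_tendsto_setIntegral_Ioi_mul_atTop (φ := fun x => φ (-x)) hq.comp_neg
    hqφ.comp_neg ?_
  simpa only [integral_comp_neg_Ioi, Function.comp_def] using hL.comp tendsto_neg_atTop_atBot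

section IntegrationByParts

variable {q g φ : ℝ → ℝ}

theorem eq_add_intervalIntegral_of_eq_setIntegral_Iic (hq : Integrable q)
    (hg : ∀ x, g x = ∫ y in Iic x, q y) (a x : ℝ) : g x = g a + ∫ y in a..x, q y := by
  rw [hg, hg, ← intervalIntegral.integral_Iic_sub_Iic hq.integrableOn hq.integrableOn,
    add_sub_cancel]

theorem continuous_of_eq_setIntegral_Iic (hq : Integrable q)
    (hg : ∀ x, g x = ∫ y in Iic x, q y) : Continuous g := by
  rw [funext (eq_add_intervalIntegral_of_eq_setIntegral_Iic hq hg 0)]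
  exact continuous_const.add
    (intervalIntegral.continuous_primitive (fun _ _ => hq.intervalIntegrable) 0)

theorem ae_hasDerivAt_of_eq_setIntegral_Iic (hq : Integrable q)
    (hg : ∀ x, g x = ∫ y in Iic x, q y) : ∀ᵐ x, HasDerivAt g (q x) x := by
  rw [funext (eq_add_intervalIntegral_of_eq_setIntegral_Iic hq hg 0)]
  filter_upwards [LocallyIntegrable.ae_hasDerivAt_integral hq.locallyIntegrable] with x hx
  exact (hx 0).const_add _

theorem eq_neg_setIntegral_Ioi_of_eq_setIntegral_Iic (hq : Integrable q) (hq0 : ∫ x, q x = 0)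
    (hg : ∀ x, g x = ∫ y in Iic x, q y) (x : ℝ) : g x = ∫ y in Ioi x, -q y := by
  rw [hg, integral_neg, eq_neg_iff_add_eq_zero, ← hq0]
  exact intervalIntegral.integral_Iic_add_Ioi hq.integrableOn hq.integrableOn

theorem intervalIntegral_mul_deriv_add_mul_eq_sub (hq : Integrable q)
    (hg : ∀ x, g x = ∫ y in Iic x, q y) {c d : ℝ} (hφ : ∀ x ∈ uIcc c d, DifferentiableAt ℝ φ x)
    (hgφ : IntervalIntegrable (fun x => g x * deriv φ x) volume c d)
    (hne : ∀ x ∈ uIcc c d, g x ≠ 0) :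
    ∫ x in c..d, (g x * deriv φ x + q x * φ x) = g d * φ d - g c * φ c := by
  have hgc := continuous_of_eq_setIntegral_Iic hq hg
  have hφ' : IntervalIntegrable (deriv φ) volume c d :=
    (hgφ.mul_continuousOn (hgc.continuousOn.inv₀ hne)).congr fun x hx => by
      rw [mul_right_comm, Pi.inv_apply, mul_inv_cancel₀ (hne x (uIoc_subset_uIcc hx)), one_mul]
  have hg_ac : AbsolutelyContinuousOnInterval g c d :=
    (hq.intervalIntegrable.absolutelyContinuousOnInterval_const_add_intervalIntegral
      left_mem_uIcc (g c)).congr fun x _ =>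
        (eq_add_intervalIntegral_of_eq_setIntegral_Iic hq hg c x).symm
  have hφ_ac : AbsolutelyContinuousOnInterval φ c d :=
    absolutelyContinuousOnInterval_of_hasDerivAt (fun x hx => (hφ x hx).hasDerivAt) hφ'
  rw [← hg_ac.integral_deriv_mul_eq_sub hφ_ac]
  refine intervalIntegral.integral_congr_ae ?_
  filter_upwards [ae_hasDerivAt_of_eq_setIntegral_Iic hq hg] with x hx _
  rw [hx.deriv]
  ring

theorem setIntegral_inter_Ioi_mul_deriv_add_mul (hq : Integrable q) (hq0 : ∫ x, q x = 0)
    (hg : ∀ x, g x = ∫ y in Iic x, q y) (hφ : Differentiable ℝ φ)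
    (hgφ : Integrable fun x => g x * deriv φ x) (hqφ : Integrable fun x => q x * φ x)
    {C : Set ℝ} (hCo : IsOpen C) (hC : C.OrdConnected) (hCg : ∀ x ∈ C, g x ≠ 0)
    (hCbd : ∀ y ∈ closure C, y ∉ C → g y = 0) {x₀ : ℝ} (hx₀ : x₀ ∈ C) :
    ∫ x in C ∩ Ioi x₀, (g x * deriv φ x + q x * φ x) = -(g x₀ * φ x₀) := by
  have hF : Integrable fun x => g x * deriv φ x + q x * φ x := hgφ.add hqφ
  have hparts : ∀ d ∈ C,
      ∫ x in x₀..d, (g x * deriv φ x + q x * φ x) = g d * φ d - g x₀ * φ x₀ := fun d hd =>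
    intervalIntegral_mul_deriv_add_mul_eq_sub hq hg (fun x _ => hφ x) hgφ.intervalIntegrable
      fun x hx => hCg x (hC.uIcc_subset hx₀ hd hx)
  by_cases hbdd : BddAbove C
  · have hb : sSup C ∉ C := hCo.csSup_notMem hbdd
    have hx₀b : x₀ < sSup C := (le_csSup hbdd hx₀).lt_of_ne (ne_of_mem_of_not_mem hx₀ hb)
    have hIco : Ico x₀ (sSup C) ⊆ C := fun d hd =>
      let ⟨_, hc, hdc⟩ := exists_lt_of_lt_csSup ⟨x₀, hx₀⟩ hd.2
      hC.out hx₀ hc ⟨hd.1, hdc.le⟩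
    have hend : ∫ x in x₀..sSup C, (g x * deriv φ x + q x * φ x) =
        g (sSup C) * φ (sSup C) - g x₀ * φ x₀ :=
      EqOn.closure (s := Ico x₀ (sSup C)) (fun d hd => hparts d (hIco hd))
        (intervalIntegral.continuous_primitive (fun _ _ => hF.intervalIntegrable) x₀)
        (((continuous_of_eq_setIntegral_Iic hq hg).mul hφ.continuous).sub continuous_const)
        (closure_Ico hx₀b.ne ▸ right_mem_Icc.2 hx₀b.le)
    rw [hC.inter_Ioi_eq_Ioo_csSup hx₀ hbdd hb, ← integral_Ioc_eq_integral_Ioo,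
      ← intervalIntegral.integral_of_le hx₀b.le, hend,
      hCbd _ (csSup_mem_closure ⟨x₀, hx₀⟩ hbdd) hb]
    ring
  · have hsub := hC.Ioi_subset_of_not_bddAbove hx₀ hbdd
    have hlim : Tendsto (fun d => (∫ y in Ioi d, -q y) * φ d) atTop
        (𝓝 (g x₀ * φ x₀ + ∫ x in Ioi x₀, (g x * deriv φ x + q x * φ x))) := by
      refine ((intervalIntegral_tendsto_integral_Ioi x₀ hF.integrableOn tendsto_id).const_add
        (g x₀ * φ x₀)).congr' ?_
      filter_upwards [eventually_gt_atTop x₀] with d hd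
      rw [id, hparts d (hsub hd), ← eq_neg_setIntegral_Ioi_of_eq_setIntegral_Iic hq hq0 hg]
      ring
    have := eq_zero_of_tendsto_setIntegral_Ioi_mul_atTop (q := fun y => -q y) hq.fun_neg
      (by simpa only [neg_mul] using hqφ.fun_neg) hlim
    rw [inter_eq_right.2 hsub]
    linarith

theorem setIntegral_inter_Iic_mul_deriv_add_mul (hq : Integrable q)
    (hg : ∀ x, g x = ∫ y in Iic x, q y) (hφ : Differentiable ℝ φ)
    (hgφ : Integrable fun x => g x * deriv φ x) (hqφ : Integrable fun x => q x * φ x)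
    {C : Set ℝ} (hCo : IsOpen C) (hC : C.OrdConnected) (hCg : ∀ x ∈ C, g x ≠ 0)
    (hCbd : ∀ y ∈ closure C, y ∉ C → g y = 0) {x₀ : ℝ} (hx₀ : x₀ ∈ C) :
    ∫ x in C ∩ Iic x₀, (g x * deriv φ x + q x * φ x) = g x₀ * φ x₀ := by
  have hF : Integrable fun x => g x * deriv φ x + q x * φ x := hgφ.add hqφ
  have hparts : ∀ c ∈ C,
      ∫ x in c..x₀, (g x * deriv φ x + q x * φ x) = g x₀ * φ x₀ - g c * φ c := fun c hc =>
    intervalIntegral_mul_deriv_add_mul_eq_sub hq hg (fun x _ => hφ x) hgφ.intervalIntegrable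
      fun x hx => hCg x (hC.uIcc_subset hc hx₀ hx)
  by_cases hbdd : BddBelow C
  · have ha : sInf C ∉ C := hCo.csInf_notMem hbdd
    have hax₀ : sInf C < x₀ := (csInf_le hbdd hx₀).lt_of_ne (ne_of_mem_of_not_mem hx₀ ha).symm
    have hIoc : Ioc (sInf C) x₀ ⊆ C := fun c hc =>
      let ⟨_, hc', hc'c⟩ := exists_lt_of_csInf_lt ⟨x₀, hx₀⟩ hc.1
      hC.out hc' hx₀ ⟨hc'c.le, hc.2⟩
    have hend : ∫ x in sInf C..x₀, (g x * deriv φ x + q x * φ x) =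
        g x₀ * φ x₀ - g (sInf C) * φ (sInf C) :=
      EqOn.closure (s := Ioc (sInf C) x₀) (fun c hc => hparts c (hIoc hc))
        ((intervalIntegral.continuous_primitive (fun _ _ => hF.intervalIntegrable) x₀).neg.congr
          fun c => (intervalIntegral.integral_symm x₀ c).symm)
        (continuous_const.sub ((continuous_of_eq_setIntegral_Iic hq hg).mul hφ.continuous))
        (closure_Ioc hax₀.ne ▸ left_mem_Icc.2 hax₀.le)
    rw [hC.inter_Iic_eq_Ioc_csInf hx₀ hbdd ha, ← intervalIntegral.integral_of_le hax₀.le, hend,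
      hCbd _ (csInf_mem_closure ⟨x₀, hx₀⟩ hbdd) ha]
    ring
  · have hsub := hC.Iic_subset_of_not_bddBelow hx₀ hbdd
    have hlim : Tendsto (fun c => (∫ y in Iic c, q y) * φ c) atBot
        (𝓝 (g x₀ * φ x₀ - ∫ x in Iic x₀, (g x * deriv φ x + q x * φ x))) := by
      refine ((intervalIntegral_tendsto_integral_Iic x₀ hF.integrableOn tendsto_id).const_sub
        (g x₀ * φ x₀)).congr' ?_
      filter_upwards [eventually_le_atBot x₀] with c hc
      rw [id, hparts c (hsub hc), ← hg]
      ring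
    have := eq_zero_of_tendsto_setIntegral_Iic_mul_atBot hq hqφ hlim
    rw [inter_eq_right.2 hsub]
    linarith

theorem setIntegral_connectedComponentIn_mul_deriv_add_mul (hq : Integrable q)
    (hq0 : ∫ x, q x = 0) (hg : ∀ x, g x = ∫ y in Iic x, q y) (hφ : Differentiable ℝ φ)
    (hgφ : Integrable fun x => g x * deriv φ x) (hqφ : Integrable fun x => q x * φ x)
    {x₀ : ℝ} (hx₀ : g x₀ ≠ 0) :
    ∫ x in connectedComponentIn {x | g x ≠ 0} x₀, (g x * deriv φ x + q x * φ x) = 0 := by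
  have hU : IsOpen {x | g x ≠ 0} :=
    isOpen_ne_fun (continuous_of_eq_setIntegral_Iic hq hg) continuous_const
  set C := connectedComponentIn {x | g x ≠ 0} x₀
  have hCo : IsOpen C := hU.connectedComponentIn
  have hC : C.OrdConnected := isPreconnected_connectedComponentIn.ordConnected
  have hCg : ∀ x ∈ C, g x ≠ 0 := fun x hx => connectedComponentIn_subset _ _ hx
  have hCbd : ∀ y ∈ closure C, y ∉ C → g y = 0 := fun y hy hyC =>
    not_not.1 fun hgy => hyC (hU.mem_connectedComponentIn_of_mem_closure hy hgy)
  have hx₀C : x₀ ∈ C := mem_connectedComponentIn hx₀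
  have hF : Integrable fun x => g x * deriv φ x + q x * φ x := hgφ.add hqφ
  rw [← integral_inter_add_sdiff measurableSet_Iic hF.integrableOn, sdiff_eq, compl_Iic,
    setIntegral_inter_Iic_mul_deriv_add_mul hq hg hφ hgφ hqφ hCo hC hCg hCbd hx₀C,
    setIntegral_inter_Ioi_mul_deriv_add_mul hq hq0 hg hφ hgφ hqφ hCo hC hCg hCbd hx₀C]
  ring

theorem integral_mul_deriv_eq_neg_integral_mul (hq : Integrable q) (hq0 : ∫ x, q x = 0)
    (hg : ∀ x, g x = ∫ y in Iic x, q y) (hφ : Differentiable ℝ φ)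
    (hgφ : Integrable fun x => g x * deriv φ x) (hqφ : Integrable fun x => q x * φ x) :
    ∫ x, g x * deriv φ x = -∫ x, q x * φ x := by
  have hU : IsOpen {x | g x ≠ 0} :=
    isOpen_ne_fun (continuous_of_eq_setIntegral_Iic hq hg) continuous_const
  have hF : Integrable fun x => g x * deriv φ x + q x * φ x := hgφ.add hqφ
  have hZ : ∫ x in {x | g x ≠ 0}ᶜ, (g x * deriv φ x + q x * φ x) = 0 := by
    refine setIntegral_eq_zero_of_ae_eq_zero ?_
    filter_upwards [ae_eq_zero_of_hasDerivAt_of_eq (ae_hasDerivAt_of_eq_setIntegral_Iic hq hg) 0]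
      with x hx (hgx : ¬g x ≠ 0)
    rw [not_not] at hgx
    simp [hgx, hx hgx]
  have hsum : ∫ x, (g x * deriv φ x + q x * φ x) = 0 := by
    rw [← integral_add_compl hU.measurableSet hF, hZ, add_zero]
    exact hU.setIntegral_eq_zero_of_connectedComponentIn hF.integrableOn fun x₀ hx₀ =>
      setIntegral_connectedComponentIn_mul_deriv_add_mul hq hq0 hg hφ hgφ hqφ hx₀
  rw [integral_add hgφ hqφ] at hsum
  linarith

end IntegrationByParts

theorem stein_identity_general
    (p : ℝ → ℝ) (hp_pos : ∀ x, 0 < p x)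
    (hp_int : Integrable p) (hp_one : ∫ x, p x = 1)
    (h : ℝ → ℝ) (hh_int : Integrable (fun x => h x * p x))
    (μh : ℝ) (hμh : μh = ∫ x, h x * p x)
    (τh : ℝ → ℝ)
    (hτh : ∀ x, τh x = (p x)⁻¹ * ∫ y in Iic x, (μh - h y) * p y)
    (φ : ℝ → ℝ) (hφ : Differentiable ℝ φ)
    (h_int : Integrable (fun x => τh x * deriv φ x * p x))
    (h_int' : Integrable (fun x => (h x - μh) * φ x * p x)) :
    ∫ x, τh x * deriv φ x * p x = ∫ x, (h x - μh) * φ x * p x := by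
  have hq : Integrable fun y => (μh - h y) * p y :=
    ((hp_int.const_mul μh).sub hh_int).congr (.of_forall fun y => by
      simp only [Pi.sub_apply]; ring)
  have hq0 : ∫ y, (μh - h y) * p y = 0 := by
    simp_rw [sub_mul]
    rw [integral_sub (hp_int.const_mul μh) hh_int, integral_const_mul, hp_one, ← hμh, mul_one,
      sub_self]
  have hg : ∀ x, τh x * p x = ∫ y in Iic x, (μh - h y) * p y := fun x => by
    rw [hτh, mul_comm, mul_inv_cancel_left₀ (hp_pos x).ne']
  have key := integral_mul_deriv_eq_neg_integral_mul hq hq0 hg hφ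
    (h_int.congr (.of_forall fun x => by ring)) (h_int'.fun_neg.congr (.of_forall fun x => by ring))
  calc ∫ x, τh x * deriv φ x * p x = ∫ x, τh x * p x * deriv φ x := by congr 1 with x; ring
    _ = -∫ x, (μh - h x) * p x * φ x := key
    _ = ∫ x, (h x - μh) * φ x * p x := by rw [← integral_neg]; congr 1 with x; ring

/-- Stein-type integration by parts: with `τ∘h (x) = p(x)⁻¹ ∫_{-∞}^x (E[h(X)] - h(y)) p(y) dy`,
for any differentiable `φ` with `E[|(τ∘h)(X) φ'(X)|] < ∞`, we have
`E[(τ∘h)(X) φ'(X)] = E[(h(X) - E[h(X)]) φ(X)]`. -/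
theorem stein_identity
    (p : ℝ → ℝ) (hp_nonneg : ∀ x, 0 ≤ p x) (hp_pos : ∀ x, 0 < p x)
    (hp_int : Integrable p) (hp_one : ∫ x, p x = 1)
    (h : ℝ → ℝ) (hh_int : Integrable (fun x => h x * p x))
    (μh : ℝ) (hμh : μh = ∫ x, h x * p x)
    (τh : ℝ → ℝ)
    (hτh : ∀ x, τh x = (p x)⁻¹ * ∫ y in Iic x, (μh - h y) * p y)
    (φ : ℝ → ℝ) (hφ : Differentiable ℝ φ)
    (h_int : Integrable (fun x => τh x * deriv φ x * p x))
    (h_int' : Integrable (fun x => (h x - μh) * φ x * p x)) :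
    ∫ x, τh x * deriv φ x * p x = ∫ x, (h x - μh) * φ x * p x :=
  stein_identity_general p hp_pos hp_int hp_one h hh_int μh hμh τh hτh φ hφ h_int h_int'
end

section
/- Let S be a real random variable with densities p₁(s) and p₂(s) (both absolutely continuous with full support on ℝ), let g be Lipschitz-continuous, and set π(s) = p₂(s)/p₁(s), assumed differentiable with E_{p₁}[π(S)|g(S)-μ₁|] < ∞ where μ₁ = E_{p₁}[g(S)]. Then |E_{p₂}[g(S)] - E_{p₁}[g(S)]| ≤ ‖g'‖_∞ · ‖π'‖_∞ · Var_{p₁}(S). -/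
open MeasureTheory Set

/-- OOD generalization bound: for two densities `p₁, p₂` on ℝ with full support,
`g` Lipschitz and `π = p₂/p₁` differentiable with bounded derivative,
`|E_{p₂}[g(S)] - E_{p₁}[g(S)]| ≤ ‖g'‖_∞ ‖π'‖_∞ Var_{p₁}(S)`. -/
theorem ood_generalization_bound
    (p₁ p₂ : ℝ → ℝ) (hp₁_pos : ∀ x, 0 < p₁ x) (hp₂_pos : ∀ x, 0 < p₂ x)
    (hp₁_int : Integrable p₁) (hp₁_one : ∫ x, p₁ x = 1)
    (hp₂_int : Integrable p₂) (hp₂_one : ∫ x, p₂ x = 1)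
    (g : ℝ → ℝ) (Kg : NNReal) (hg : LipschitzWith Kg g)
    (π : ℝ → ℝ) (hπ : ∀ x, π x = p₂ x / p₁ x)
    (hπ_diff : Differentiable ℝ π)
    (Kπ : ℝ) (hKπ : ∀ x, |deriv π x| ≤ Kπ)
    (μ₁ : ℝ) (hμ₁ : μ₁ = ∫ s, g s * p₁ s)
    (hg₁_int : Integrable (fun s => g s * p₁ s))
    (hg₂_int : Integrable (fun s => g s * p₂ s))
    (hπg_int : Integrable (fun s => π s * |g s - μ₁| * p₁ s))
    (m₁ : ℝ) (hm₁ : m₁ = ∫ s, s * p₁ s)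
    (hm₁_int : Integrable (fun s => s * p₁ s))
    (hvar_int : Integrable (fun s => (s - m₁) ^ 2 * p₁ s)) :
    |(∫ s, g s * p₂ s) - ∫ s, g s * p₁ s| ≤
      (Kg : ℝ) * Kπ * ∫ s, (s - m₁) ^ 2 * p₁ s := by
  have hp₁ne : ∀ x, p₁ x ≠ 0 := fun x => (hp₁_pos x).ne'
  have hpp : ∀ x, π x * p₁ x = p₂ x := fun x => by
    rw [hπ x, div_mul_cancel₀ _ (hp₁ne x)]
  set V : ℝ := ∫ s, (s - m₁) ^ 2 * p₁ s with hV
  set Δ : ℝ := (∫ s, g s * p₂ s) - ∫ s, g s * p₁ s with hΔ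
  -- integrability of quadratic weights
  have hsq_int : Integrable (fun s => s ^ 2 * p₁ s) := by
    have h : (fun s => s ^ 2 * p₁ s)
        = fun s => ((s - m₁) ^ 2 * p₁ s + (2 * m₁) * (s * p₁ s)) - m₁ ^ 2 * p₁ s := by
      funext s; ring
    rw [h]
    exact (hvar_int.add (hm₁_int.const_mul _)).sub (hp₁_int.const_mul _)
  have hquad_int : ∀ t : ℝ, Integrable (fun s => (s - t) ^ 2 * p₁ s) := by
    intro t
    have h : (fun s => (s - t) ^ 2 * p₁ s)
        = fun s => (s ^ 2 * p₁ s - (2 * t) * (s * p₁ s)) + t ^ 2 * p₁ s := by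
      funext s; ring
    rw [h]
    exact (hsq_int.sub (hm₁_int.const_mul _)).add (hp₁_int.const_mul _)
  have hquad_val : ∀ t : ℝ, ∫ s, (s - t) ^ 2 * p₁ s = V + (t - m₁) ^ 2 := by
    intro t
    have h1 : (fun s => (s - t) ^ 2 * p₁ s)
        = fun s => (s - m₁) ^ 2 * p₁ s + ((2 * (m₁ - t)) * (s * p₁ s)
            + (t ^ 2 - m₁ ^ 2) * p₁ s) := by funext s; ring
    have i1 : Integrable (fun s => (2 * (m₁ - t)) * (s * p₁ s)) := hm₁_int.const_mul _
    have i2 : Integrable (fun s => (t ^ 2 - m₁ ^ 2) * p₁ s) := hp₁_int.const_mul _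
    have i12 : Integrable (fun s => (2 * (m₁ - t)) * (s * p₁ s)
        + (t ^ 2 - m₁ ^ 2) * p₁ s) := i1.add i2
    rw [h1, integral_add hvar_int i12, integral_add i1 i2,
      integral_const_mul, integral_const_mul, ← hm₁, hp₁_one, ← hV]
    ring
  -- Lipschitz bounds
  have hπlip : ∀ x y : ℝ, |π x - π y| ≤ Kπ * |x - y| := by
    intro x y
    have hd : ∀ z ∈ (univ : Set ℝ), ‖deriv π z‖ ≤ Kπ := fun z _ => by
      rw [Real.norm_eq_abs]; exact hKπ z
    have h := Convex.norm_image_sub_le_of_norm_deriv_le (f := π)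
      (fun z _ => hπ_diff z) hd convex_univ (mem_univ y) (mem_univ x)
    simpa [Real.norm_eq_abs] using h
  have hglip : ∀ x y : ℝ, |g x - g y| ≤ (Kg : ℝ) * |x - y| := by
    intro x y
    have h := hg.dist_le_mul x y
    simpa [Real.dist_eq] using h
  -- pointwise bound on the inner integral
  have hbound : ∀ t : ℝ, |∫ s, (g s - g t) * (π s - π t) * p₁ s|
      ≤ (Kg : ℝ) * Kπ * (V + (t - m₁) ^ 2) := by
    intro t
    have hmaj : Integrable (fun s => ((Kg : ℝ) * Kπ) * ((s - t) ^ 2 * p₁ s)) :=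
      (hquad_int t).const_mul _
    have hpt : ∀ s, ‖(g s - g t) * (π s - π t) * p₁ s‖
        ≤ ((Kg : ℝ) * Kπ) * ((s - t) ^ 2 * p₁ s) := by
      intro s
      rw [Real.norm_eq_abs, abs_mul, abs_mul, abs_of_pos (hp₁_pos s)]
      have h1 := hglip s t
      have h2 := hπlip s t
      have hm : |g s - g t| * |π s - π t|
          ≤ ((Kg : ℝ) * |s - t|) * (Kπ * |s - t|) :=
        mul_le_mul h1 h2 (abs_nonneg _) (by positivity)
      calc |g s - g t| * |π s - π t| * p₁ s
          ≤ ((Kg : ℝ) * |s - t|) * (Kπ * |s - t|) * p₁ s :=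
            mul_le_mul_of_nonneg_right hm (hp₁_pos s).le
        _ = ((Kg : ℝ) * Kπ) * (|s - t| ^ 2 * p₁ s) := by ring
        _ = ((Kg : ℝ) * Kπ) * ((s - t) ^ 2 * p₁ s) := by rw [sq_abs]
    have h := norm_integral_le_of_norm_le hmaj (ae_of_all _ hpt)
    rw [integral_const_mul, hquad_val t] at h
    simpa [Real.norm_eq_abs] using h
  -- exact value of the inner integral
  have hinner : ∀ t : ℝ, ∫ s, (g s - g t) * (π s - π t) * p₁ s
      = Δ + (μ₁ - g t) * (1 - π t) := by
    intro t
    have h1 : (fun s => (g s - g t) * (π s - π t) * p₁ s)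
        = fun s => ((g s * p₂ s - π t * (g s * p₁ s)) - g t * p₂ s)
            + (g t * π t) * p₁ s := by
      funext s; rw [← hpp s]; ring
    have i2 : Integrable (fun s => π t * (g s * p₁ s)) := hg₁_int.const_mul _
    have i3 : Integrable (fun s => g t * p₂ s) := hp₂_int.const_mul _
    have i4 : Integrable (fun s => (g t * π t) * p₁ s) := hp₁_int.const_mul _
    have iA : Integrable (fun s => g s * p₂ s - π t * (g s * p₁ s)) := hg₂_int.sub i2
    have iB : Integrable (fun s => (g s * p₂ s - π t * (g s * p₁ s)) - g t * p₂ s) :=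
      iA.sub i3
    rw [h1, integral_add iB i4, integral_sub iA i3, integral_sub hg₂_int i2,
      integral_const_mul, integral_const_mul, integral_const_mul,
      hp₂_one, hp₁_one, hΔ, hμ₁]
    ring
  -- exact value of the outer integral
  have houter : ∫ t, (Δ + (μ₁ - g t) * (1 - π t)) * p₁ t = 2 * Δ := by
    have h1 : (fun t => (Δ + (μ₁ - g t) * (1 - π t)) * p₁ t)
        = fun t => ((((Δ * p₁ t + μ₁ * p₁ t) - μ₁ * p₂ t) - g t * p₁ t) + g t * p₂ t) := by
      funext t; rw [← hpp t]; ring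
    have i1 : Integrable (fun t => Δ * p₁ t) := hp₁_int.const_mul _
    have i2 : Integrable (fun t => μ₁ * p₁ t) := hp₁_int.const_mul _
    have i3 : Integrable (fun t => μ₁ * p₂ t) := hp₂_int.const_mul _
    have i12 : Integrable (fun t => Δ * p₁ t + μ₁ * p₁ t) := i1.add i2
    have iA : Integrable (fun t => (Δ * p₁ t + μ₁ * p₁ t) - μ₁ * p₂ t) := i12.sub i3
    have iB : Integrable (fun t => ((Δ * p₁ t + μ₁ * p₁ t) - μ₁ * p₂ t) - g t * p₁ t) :=
      iA.sub hg₁_int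
    rw [h1, integral_add iB hg₂_int, integral_sub iA hg₁_int, integral_sub i12 i3,
      integral_add i1 i2, integral_const_mul, integral_const_mul, integral_const_mul,
      hp₁_one, hp₂_one, hΔ]
    ring
  -- bound on the outer integral
  have hvp_int : Integrable (fun t => (V + (t - m₁) ^ 2) * p₁ t) := by
    have h : (fun t => (V + (t - m₁) ^ 2) * p₁ t)
        = fun t => V * p₁ t + (t - m₁) ^ 2 * p₁ t := by funext t; ring
    rw [h]; exact (hp₁_int.const_mul V).add hvar_int
  have hmaj2 : Integrable (fun t => ((Kg : ℝ) * Kπ) * ((V + (t - m₁) ^ 2) * p₁ t)) :=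
    hvp_int.const_mul _
  have hpt2 : ∀ t, ‖(Δ + (μ₁ - g t) * (1 - π t)) * p₁ t‖
      ≤ ((Kg : ℝ) * Kπ) * ((V + (t - m₁) ^ 2) * p₁ t) := by
    intro t
    rw [Real.norm_eq_abs, abs_mul, abs_of_pos (hp₁_pos t)]
    have hb : |Δ + (μ₁ - g t) * (1 - π t)| ≤ (Kg : ℝ) * Kπ * (V + (t - m₁) ^ 2) := by
      rw [← hinner t]; exact hbound t
    calc |Δ + (μ₁ - g t) * (1 - π t)| * p₁ t
        ≤ (Kg : ℝ) * Kπ * (V + (t - m₁) ^ 2) * p₁ t :=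
          mul_le_mul_of_nonneg_right hb (hp₁_pos t).le
      _ = ((Kg : ℝ) * Kπ) * ((V + (t - m₁) ^ 2) * p₁ t) := by ring
  have hmajval : ∫ t, ((Kg : ℝ) * Kπ) * ((V + (t - m₁) ^ 2) * p₁ t)
      = (Kg : ℝ) * Kπ * (2 * V) := by
    rw [integral_const_mul]
    congr 1
    have h1 : (fun t => (V + (t - m₁) ^ 2) * p₁ t)
        = fun t => V * p₁ t + (t - m₁) ^ 2 * p₁ t := by funext t; ring
    rw [h1, integral_add (hp₁_int.const_mul V) hvar_int, integral_const_mul, hp₁_one, ← hV]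
    ring
  have h2 := norm_integral_le_of_norm_le hmaj2 (ae_of_all _ hpt2)
  rw [hmajval, houter, Real.norm_eq_abs, abs_mul, abs_two] at h2
  have hΔabs : 0 ≤ |Δ| := abs_nonneg _
  linarith [h2]
end

section
/- Let p₁ be a density on ℝ with finite mean, let g be Lipschitz, and define f_g(x) = [∫_{-∞}^x (E[g(X)]-g(y))p₁(y)dy] / [∫_{-∞}^x (E[X]-y)p₁(y)dy]. Then |f_g(x)| ≤ ‖g'‖_∞ wherever the denominator is nonzero. -/
open MeasureTheory Set

/-- The ratio `f_g = (τ_P ∘ g)/τ_P` of the generalized Stein kernel over the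
Stein kernel is bounded by the Lipschitz constant of `g`:
`|f_g(x)| ≤ ‖g'‖_∞` wherever the denominator is nonzero. -/
theorem stein_kernel_ratio_bound
    (p₁ : ℝ → ℝ) (hp_nonneg : ∀ x, 0 ≤ p₁ x)
    (hp_int : Integrable p₁) (hp_one : ∫ x, p₁ x = 1)
    (hmean_int : Integrable (fun t => t * p₁ t))
    (g : ℝ → ℝ) (Kg : NNReal) (hg : LipschitzWith Kg g)
    (hg_int : Integrable (fun t => g t * p₁ t))
    (μg μX : ℝ) (hμg : μg = ∫ t, g t * p₁ t) (hμX : μX = ∫ t, t * p₁ t)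
    (x : ℝ) (hden : (∫ y in Iic x, (μX - y) * p₁ y) ≠ 0) :
    |(∫ y in Iic x, (μg - g y) * p₁ y) / ∫ y in Iic x, (μX - y) * p₁ y| ≤ (Kg : ℝ) := by
  have hpIic : IntegrableOn p₁ (Iic x) := hp_int.integrableOn
  have hpIoi : IntegrableOn p₁ (Ioi x) := hp_int.integrableOn
  have hgIic : IntegrableOn (fun t => g t * p₁ t) (Iic x) := hg_int.integrableOn
  have hgIoi : IntegrableOn (fun t => g t * p₁ t) (Ioi x) := hg_int.integrableOn
  have htIic : IntegrableOn (fun t => t * p₁ t) (Iic x) := hmean_int.integrableOn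
  have htIoi : IntegrableOn (fun t => t * p₁ t) (Ioi x) := hmean_int.integrableOn
  set A := ∫ y in Iic x, p₁ y with hA
  set B := ∫ y in Ioi x, p₁ y with hB
  set Gle := ∫ y in Iic x, g y * p₁ y with hGle
  set Ggt := ∫ y in Ioi x, g y * p₁ y with hGgt
  set Tle := ∫ y in Iic x, y * p₁ y with hTle
  set Tgt := ∫ y in Ioi x, y * p₁ y with hTgt
  have hAB : A + B = 1 := by
    rw [hA, hB, intervalIntegral.integral_Iic_add_Ioi hpIic hpIoi, hp_one]
  have hμg2 : μg = Gle + Ggt := by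
    rw [hμg, hGle, hGgt, intervalIntegral.integral_Iic_add_Ioi hgIic hgIoi]
  have hμX2 : μX = Tle + Tgt := by
    rw [hμX, hTle, hTgt, intervalIntegral.integral_Iic_add_Ioi htIic htIoi]
  have hBnn : 0 ≤ B := setIntegral_nonneg measurableSet_Ioi fun y _ => hp_nonneg y
  have hxB : x * B ≤ Tgt := by
    rw [hB, ← integral_const_mul, hTgt]
    exact setIntegral_mono_on (hpIoi.const_mul x) htIoi measurableSet_Ioi
      fun t ht => mul_le_mul_of_nonneg_right ht.le (hp_nonneg t)
  -- rewrite numerator and denominator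
  have e1 : ∀ (c : ℝ) (f : ℝ → ℝ), IntegrableOn (fun t => f t * p₁ t) (Iic x) →
      (∫ y in Iic x, (c - f y) * p₁ y) = c * A - ∫ y in Iic x, f y * p₁ y := by
    intro c f hf
    have : (∫ y in Iic x, (c - f y) * p₁ y)
        = (∫ y in Iic x, c * p₁ y) - ∫ y in Iic x, f y * p₁ y := by
      rw [← integral_sub (hpIic.const_mul c) hf]
      congr 1; ext t; ring
    rw [this, integral_const_mul, hA]
  have eIoi : ∀ (c : ℝ) (f : ℝ → ℝ), IntegrableOn (fun t => f t * p₁ t) (Ioi x) →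
      (∫ t in Ioi x, (f t - c) * p₁ t) = (∫ t in Ioi x, f t * p₁ t) - c * B := by
    intro c f hf
    have : (∫ t in Ioi x, (f t - c) * p₁ t)
        = (∫ t in Ioi x, f t * p₁ t) - ∫ t in Ioi x, c * p₁ t := by
      rw [← integral_sub hf (hpIoi.const_mul c)]
      congr 1; ext t; ring
    rw [this, integral_const_mul, hB]
  have hNint : IntegrableOn (fun y => (Ggt - B * g y) * p₁ y) (Iic x) := by
    have : (fun y => (Ggt - B * g y) * p₁ y)
        = fun y => Ggt * p₁ y - B * (g y * p₁ y) := by ext t; ring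
    rw [this]
    exact (hpIic.const_mul Ggt).sub (hgIic.const_mul B)
  have hDint : IntegrableOn (fun y => (Tgt - B * y) * p₁ y) (Iic x) := by
    have : (fun y => (Tgt - B * y) * p₁ y)
        = fun y => Tgt * p₁ y - B * (y * p₁ y) := by ext t; ring
    rw [this]
    exact (hpIic.const_mul Tgt).sub (htIic.const_mul B)
  have hN : (∫ y in Iic x, (μg - g y) * p₁ y) = ∫ y in Iic x, (Ggt - B * g y) * p₁ y := by
    rw [e1 μg g hgIic]
    have e2 : (∫ y in Iic x, (Ggt - B * g y) * p₁ y) = Ggt * A - B * Gle := by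
      have : (∫ y in Iic x, (Ggt - B * g y) * p₁ y)
          = (∫ y in Iic x, Ggt * p₁ y) - ∫ y in Iic x, B * (g y * p₁ y) := by
        rw [← integral_sub (hpIic.const_mul Ggt) (hgIic.const_mul B)]
        congr 1; ext t; ring
      rw [this, integral_const_mul, integral_const_mul, ← hA, ← hGle]
    rw [e2, hμg2]
    have hA1 : A = 1 - B := by linarith
    rw [hA1]; ring
  have hD : (∫ y in Iic x, (μX - y) * p₁ y) = ∫ y in Iic x, (Tgt - B * y) * p₁ y := by
    rw [e1 μX (fun y => y) htIic]
    have e2 : (∫ y in Iic x, (Tgt - B * y) * p₁ y) = Tgt * A - B * Tle := by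
      have : (∫ y in Iic x, (Tgt - B * y) * p₁ y)
          = (∫ y in Iic x, Tgt * p₁ y) - ∫ y in Iic x, B * (y * p₁ y) := by
        rw [← integral_sub (hpIic.const_mul Tgt) (htIic.const_mul B)]
        congr 1; ext t; ring
      rw [this, integral_const_mul, integral_const_mul, ← hA, ← hTle]
    rw [e2, hμX2]
    have hA1 : A = 1 - B := by linarith
    rw [hA1]; ring
  -- the key pointwise bound
  have key : ∀ y ∈ Iic x, |Ggt - B * g y| ≤ (Kg : ℝ) * (Tgt - B * y) := by
    intro y hy
    have h1 : Ggt - B * g y = ∫ t in Ioi x, (g t - g y) * p₁ t := by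
      rw [eIoi (g y) g hgIoi, ← hGgt]; ring
    have h2 : Tgt - B * y = ∫ t in Ioi x, (t - y) * p₁ t := by
      rw [eIoi y (fun t => t) htIoi, ← hTgt]; ring
    rw [h1, h2]
    have habs : |∫ t in Ioi x, (g t - g y) * p₁ t| ≤ ∫ t in Ioi x, |(g t - g y) * p₁ t| := by
      have := norm_integral_le_integral_norm (μ := volume.restrict (Ioi x))
          (f := fun t => (g t - g y) * p₁ t)
      simpa only [Real.norm_eq_abs] using this
    refine habs.trans ?_
    have hint1 : IntegrableOn (fun t => |(g t - g y) * p₁ t|) (Ioi x) := by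
      have : IntegrableOn (fun t => (g t - g y) * p₁ t) (Ioi x) := by
        have : (fun t => (g t - g y) * p₁ t) = fun t => g t * p₁ t - g y * p₁ t := by
          ext t; ring
        rw [this]
        exact hgIoi.sub (hpIoi.const_mul (g y))
      exact this.abs
    have hint2 : IntegrableOn (fun t => (Kg : ℝ) * ((t - y) * p₁ t)) (Ioi x) := by
      have h0 : IntegrableOn (fun t => (t - y) * p₁ t) (Ioi x) := by
        have : (fun t => (t - y) * p₁ t) = fun t => t * p₁ t - y * p₁ t := by
          ext t; ring
        rw [this]
        exact htIoi.sub (hpIoi.const_mul y)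
      exact h0.const_mul _
    have hmono := setIntegral_mono_on hint1 hint2 measurableSet_Ioi (fun t ht => ?_)
    · rw [integral_const_mul] at hmono; exact hmono
    · have hlip : |g t - g y| ≤ (Kg : ℝ) * |t - y| := by
        have := hg.dist_le_mul t y
        rwa [Real.dist_eq, Real.dist_eq] at this
      have hty : |t - y| = t - y := abs_of_nonneg (by linarith [mem_Ioi.mp ht, mem_Iic.mp hy])
      calc |(g t - g y) * p₁ t| = |g t - g y| * p₁ t := by
            rw [abs_mul, abs_of_nonneg (hp_nonneg t)]
        _ ≤ ((Kg : ℝ) * |t - y|) * p₁ t := by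
            exact mul_le_mul_of_nonneg_right hlip (hp_nonneg t)
        _ = (Kg : ℝ) * ((t - y) * p₁ t) := by rw [hty]; ring
  -- denominator positivity
  rw [hN, hD]
  rw [hD] at hden
  set D := ∫ y in Iic x, (Tgt - B * y) * p₁ y with hDdef
  have hDnn : 0 ≤ D := by
    refine setIntegral_nonneg measurableSet_Iic fun y hy => ?_
    have : B * y ≤ B * x := mul_le_mul_of_nonneg_left (mem_Iic.mp hy) hBnn
    have h1 : 0 ≤ Tgt - B * y := by nlinarith
    exact mul_nonneg h1 (hp_nonneg y)
  have hDpos : 0 < D := lt_of_le_of_ne hDnn (Ne.symm hden)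
  have hNle : |∫ y in Iic x, (Ggt - B * g y) * p₁ y| ≤ (Kg : ℝ) * D := by
    have habs : |∫ y in Iic x, (Ggt - B * g y) * p₁ y|
        ≤ ∫ y in Iic x, |(Ggt - B * g y) * p₁ y| := by
      have := norm_integral_le_integral_norm (μ := volume.restrict (Iic x))
          (f := fun y => (Ggt - B * g y) * p₁ y)
      simpa only [Real.norm_eq_abs] using this
    refine habs.trans ?_
    have hint2 : IntegrableOn (fun y => (Kg : ℝ) * ((Tgt - B * y) * p₁ y)) (Iic x) :=
      hDint.const_mul _
    have hmono := setIntegral_mono_on hNint.abs hint2 measurableSet_Iic (fun y hy => ?_)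
    · rw [integral_const_mul] at hmono; exact hmono
    · calc |(Ggt - B * g y) * p₁ y| = |Ggt - B * g y| * p₁ y := by
            rw [abs_mul, abs_of_nonneg (hp_nonneg y)]
        _ ≤ ((Kg : ℝ) * (Tgt - B * y)) * p₁ y :=
            mul_le_mul_of_nonneg_right (key y hy) (hp_nonneg y)
        _ = (Kg : ℝ) * ((Tgt - B * y) * p₁ y) := by ring
  rw [abs_div, abs_of_pos hDpos, div_le_iff₀ hDpos]
  exact hNle
end

section
/- Gumbel-softmax convergence: let y_T(i) = exp((f_i(s)+ε_i)/T) / Σ_j exp((f_j(s)+ε_j)/T) with ε₁,...,ε_k i.i.d. standard Gumbel. As T → 0, the random vector y_T converges in distribution to the one-hot vector y with P(y(i)=1) = exp(f_i(s)) / Σ_j exp(f_j(s)). -/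
/-!
Put `Z i = f i + ε i`: independent Gumbel variables with locations `f i`, realised as images of a
uniform variable on `(0, 1)` under the quantile `u ↦ a - log (-log u)`. Conditioning on `Z i = x`,
independence gives `P (∀ j ≠ i, Z j < Z i) = ∫ exp (-c e^{-x}) d(Gumbel (f i))` with
`c = ∑ j ≠ i, exp (f j)`, and the substitution `x = f i - log (-log u)` turns this into
`∫₀¹ u ^ (c e^{-f i}) du = exp (f i) / ∑ j, exp (f j)` (the Gumbel-max trick). The Gumbel law has
no atoms, so ties have probability zero and almost surely the maximum of the `Z i` is strict; at
such a sample the tempered softmax tends to the one-hot vector of the argmax as `T → 0⁺`, and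
dominated convergence (`g` is bounded) passes to the limit of expectations.
-/

open MeasureTheory Filter Topology ProbabilityTheory Set Real

noncomputable def gumbelQuantile (a u : ℝ) : ℝ := a - log (-log u)

noncomputable def gumbelMeasure (a : ℝ) : Measure ℝ :=
  (volume.restrict (Ioo 0 1)).map (gumbelQuantile a)

@[fun_prop]
lemma measurable_gumbelQuantile (a : ℝ) : Measurable (gumbelQuantile a) := by
  unfold gumbelQuantile; fun_prop

lemma neg_log_pos_of_mem_Ioo {u : ℝ} (hu : u ∈ Ioo (0 : ℝ) 1) : 0 < -log u :=
  neg_pos.2 (log_neg hu.1 hu.2)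

lemma gumbelQuantile_le_iff {a x u : ℝ} (hu : u ∈ Ioo (0 : ℝ) 1) :
    gumbelQuantile a u ≤ x ↔ u ≤ exp (-exp (-(x - a))) := by
  rw [gumbelQuantile, sub_le_comm, le_log_iff_exp_le (neg_log_pos_of_mem_Ioo hu), le_neg,
    ← log_le_iff_le_exp hu.1, neg_sub]

lemma strictMonoOn_gumbelQuantile (a : ℝ) : StrictMonoOn (gumbelQuantile a) (Ioo 0 1) :=
  fun _ hu _ hv huv => sub_lt_sub_left
    (log_lt_log (neg_log_pos_of_mem_Ioo hv) (neg_lt_neg (log_lt_log hu.1 huv))) a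

lemma gumbelMeasure_Iic (a x : ℝ) :
    gumbelMeasure a (Iic x) = ENNReal.ofReal (exp (-exp (-(x - a)))) := by
  have hpre : gumbelQuantile a ⁻¹' Iic x ∩ Ioo 0 1 = Ioc 0 (exp (-exp (-(x - a)))) := by
    ext u
    constructor
    · rintro ⟨hux, hu⟩
      exact ⟨hu.1, (gumbelQuantile_le_iff hu).1 hux⟩
    · rintro ⟨hu0, hux⟩
      have hu : u ∈ Ioo (0 : ℝ) 1 :=
        ⟨hu0, hux.trans_lt (exp_lt_one_iff.2 (neg_neg_of_pos (exp_pos _)))⟩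
      exact ⟨(gumbelQuantile_le_iff hu).2 hux, hu⟩
  rw [gumbelMeasure, Measure.map_apply (by fun_prop) measurableSet_Iic,
    Measure.restrict_apply (measurable_gumbelQuantile a measurableSet_Iic), hpre,
    volume_Ioc, sub_zero]

instance (a : ℝ) : IsProbabilityMeasure (gumbelMeasure a) :=
  ⟨by simp [gumbelMeasure, Measure.map_apply (measurable_gumbelQuantile a) MeasurableSet.univ]⟩

instance (a : ℝ) : NullSingletonClass (gumbelMeasure a) where
  measure_singleton x := by
    rw [gumbelMeasure, Measure.map_apply (by fun_prop) (measurableSet_singleton x),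
      Measure.restrict_apply (measurable_gumbelQuantile a (measurableSet_singleton x))]
    refine Set.Subsingleton.measure_zero (fun u hu v hv => ?_) _
    exact (strictMonoOn_gumbelQuantile a).injOn hu.2 hv.2 (hu.1.trans hv.1.symm)

lemma gumbelMeasure_Iio (a x : ℝ) :
    gumbelMeasure a (Iio x) = ENNReal.ofReal (exp (-exp (-(x - a)))) := by
  rw [measure_congr Iio_ae_eq_Iic, gumbelMeasure_Iic]

lemma lintegral_exp_neg_mul_exp_neg_gumbelMeasure (a : ℝ) {c : ℝ} (hc : 0 ≤ c) :
    ∫⁻ x, ENNReal.ofReal (exp (-(c * exp (-x)))) ∂gumbelMeasure a =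
      ENNReal.ofReal (exp a / (exp a + c)) := by
  set p := c * exp (-a)
  have hp : 0 ≤ p := by positivity
  have hsubst : ∀ u ∈ Ioo (0 : ℝ) 1,
      ENNReal.ofReal (exp (-(c * exp (-gumbelQuantile a u)))) = ENNReal.ofReal (u ^ p) := by
    intro u hu
    rw [gumbelQuantile, neg_sub, exp_sub, exp_log (neg_log_pos_of_mem_Ioo hu),
      rpow_def_of_pos hu.1]
    congr 2
    simp only [p, exp_neg]
    field_simp
  have hint : IntegrableOn (fun u : ℝ => u ^ p) (Ioc 0 1) :=
    (intervalIntegrable_iff_integrableOn_Ioc_of_le zero_le_one).1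
      (intervalIntegral.intervalIntegrable_rpow' (by linarith))
  rw [gumbelMeasure, lintegral_map (by fun_prop) (measurable_gumbelQuantile a),
    setLIntegral_congr_fun measurableSet_Ioo hsubst, Measure.restrict_congr_set Ioo_ae_eq_Ioc,
    ← ofReal_integral_eq_lintegral_ofReal hint
      ((ae_restrict_mem measurableSet_Ioc).mono fun u hu => rpow_nonneg hu.1.le p),
    ← intervalIntegral.integral_of_le zero_le_one, integral_rpow (Or.inl (by linarith)),
    one_rpow, zero_rpow (by linarith)]
  congr 1
  simp only [p, exp_neg]
  field_simp
  ring

lemma map_add_eq_gumbelMeasure {Ω : Type*} [MeasurableSpace Ω] {P : Measure Ω}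
    [IsFiniteMeasure P] {X : Ω → ℝ} (hX : Measurable X)
    (hcdf : ∀ x, P {ω | X ω ≤ x} = ENNReal.ofReal (exp (-exp (-x)))) (a : ℝ) :
    P.map (fun ω => a + X ω) = gumbelMeasure a := by
  refine Measure.ext_of_Iic _ _ fun x => ?_
  rw [Measure.map_apply (by fun_prop) measurableSet_Iic, gumbelMeasure_Iic, ← hcdf]
  congr 1
  ext ω
  simp only [mem_preimage, mem_Iic, mem_ofPred_eq]
  constructor <;> intro <;> linarith

namespace ProbabilityTheory

variable {Ω : Type*} [MeasurableSpace Ω] {P : Measure Ω} [IsFiniteMeasure P]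

lemma IndepFun.measure_mem_eq_lintegral {α β : Type*} [MeasurableSpace α] [MeasurableSpace β]
    {X : Ω → α} {Y : Ω → β} (hXY : IndepFun X Y P) (hX : Measurable X) (hY : Measurable Y)
    {s : Set (α × β)} (hs : MeasurableSet s) :
    P {ω | (X ω, Y ω) ∈ s} = ∫⁻ x, P.map Y (Prod.mk x ⁻¹' s) ∂P.map X := by
  rw [← Measure.prod_apply hs,
    ← (indepFun_iff_map_prod_eq_prod_map_map hX.aemeasurable hY.aemeasurable).1 hXY,
    Measure.map_apply (hX.prodMk hY) hs]
  rfl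

lemma IndepFun.measure_eq_eq_zero {X Y : Ω → ℝ} (hXY : IndepFun X Y P) (hX : Measurable X)
    (hY : Measurable Y) [NullSingletonClass (P.map Y)] :
    P {ω | X ω = Y ω} = 0 := by
  have hdiag : MeasurableSet {p : ℝ × ℝ | p.1 = p.2} :=
    measurableSet_eq_fun measurable_fst measurable_snd
  rw [show {ω | X ω = Y ω} = {ω | (X ω, Y ω) ∈ {p : ℝ × ℝ | p.1 = p.2}} from rfl,
    hXY.measure_mem_eq_lintegral hX hY hdiag]
  simp

lemma iIndepFun.measure_forall_lt_eq_lintegral {ι : Type*} [Fintype ι] [DecidableEq ι]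
    {Z : ι → Ω → ℝ} (hind : iIndepFun Z P) (hZ : ∀ i, Measurable (Z i)) (i : ι) :
    P {ω | ∀ j ≠ i, Z j ω < Z i ω} =
      ∫⁻ x, ∏ j ∈ Finset.univ.erase i, P.map (Z j) (Iio x) ∂P.map (Z i) := by
  set T := Finset.univ.erase i
  set Y : Ω → T → ℝ := fun ω j => Z j ω
  have hY : Measurable Y := measurable_pi_lambda _ fun j => hZ j
  have hindY : IndepFun (Z i) Y P :=
    (hind.indepFun_finset {i} T (by simp [T]) hZ).comp
      (measurable_pi_apply (⟨i, Finset.mem_singleton_self i⟩ : ({i} : Finset ι)))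
      measurable_id
  have hs : MeasurableSet {p : ℝ × (T → ℝ) | ∀ j, p.2 j < p.1} := by
    simp only [ofPred_forall]
    exact .iInter fun j => measurableSet_lt (by fun_prop) (by fun_prop)
  have hslice (x : ℝ) :
      P.map Y (Prod.mk x ⁻¹' {p | ∀ j, p.2 j < p.1}) =
        ∏ j ∈ T, P.map (Z j) (Iio x) := by
    rw [Measure.map_apply hY (hs.preimage measurable_prodMk_left)]
    have : Y ⁻¹' (Prod.mk x ⁻¹' {p | ∀ j, p.2 j < p.1}) = ⋂ j ∈ T, Z j ⁻¹' Iio x := by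
      ext ω; simp [Y, T]
    rw [this, hind.measure_inter_preimage_eq_mul T fun _ _ => measurableSet_Iio]
    exact Finset.prod_congr rfl fun j _ =>
      (Measure.map_apply (hZ j) measurableSet_Iio).symm
  have hset :
      {ω | ∀ j ≠ i, Z j ω < Z i ω} = {ω | (Z i ω, Y ω) ∈ {p | ∀ j, p.2 j < p.1}} := by
    ext ω; simp [Y, T]
  rw [hset, hindY.measure_mem_eq_lintegral (hZ i) hY hs]
  exact lintegral_congr hslice

lemma iIndepFun.measure_forall_lt_eq_of_gumbel {ι : Type*} [Fintype ι] [DecidableEq ι]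
    {Z : ι → Ω → ℝ} (hind : iIndepFun Z P) (hZ : ∀ i, Measurable (Z i)) {a : ι → ℝ}
    (hlaw : ∀ i, P.map (Z i) = gumbelMeasure (a i)) (i : ι) :
    P {ω | ∀ j ≠ i, Z j ω < Z i ω} = ENNReal.ofReal (exp (a i) / ∑ j, exp (a j)) := by
  set c := ∑ j ∈ Finset.univ.erase i, exp (a j) with hc
  have hprod (x : ℝ) : ∏ j ∈ Finset.univ.erase i, P.map (Z j) (Iio x) =
      ENNReal.ofReal (exp (-(c * exp (-x)))) := by
    simp only [hlaw, gumbelMeasure_Iio]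
    rw [← ENNReal.ofReal_prod_of_nonneg fun _ _ => (exp_pos _).le, ← exp_sum, hc,
      Finset.sum_mul, ← Finset.sum_neg_distrib]
    congr 3 with j
    rw [neg_sub, exp_sub, exp_neg, div_eq_mul_inv]
  rw [hind.measure_forall_lt_eq_lintegral hZ, lintegral_congr hprod, hlaw,
    lintegral_exp_neg_mul_exp_neg_gumbelMeasure _ (by positivity), hc,
    Finset.add_sum_erase _ (fun j => exp (a j)) (Finset.mem_univ i)]

end ProbabilityTheory

section Softmax

variable {ι : Type*} [Fintype ι]

noncomputable def temperedSoftmax (z : ι → ℝ) (T : ℝ) : ι → ℝ :=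
  fun j => exp (z j / T) / ∑ l, exp (z l / T)

lemma tendsto_temperedSoftmax_nhdsGT_zero [DecidableEq ι] {z : ι → ℝ} {i : ι}
    (hi : ∀ j ≠ i, z j < z i) :
    Tendsto (temperedSoftmax z) (𝓝[>] 0) (𝓝 (Pi.single i 1)) := by
  have hshift (T : ℝ) (j : ι) :
      temperedSoftmax z T j = exp ((z j - z i) / T) / ∑ l, exp ((z l - z i) / T) := by
    simp only [temperedSoftmax, sub_div, exp_sub, ← Finset.sum_div]
    rw [div_div_div_cancel_right₀ (exp_pos _).ne']
  have hexp (l : ι) :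
      Tendsto (fun T => exp ((z l - z i) / T)) (𝓝[>] 0)
        (𝓝 ((Pi.single i 1 : ι → ℝ) l)) := by
    rcases eq_or_ne l i with rfl | hl
    · simp
    · rw [Pi.single_eq_of_ne hl]
      simp only [div_eq_mul_inv]
      exact tendsto_exp_atBot.comp
        ((tendsto_const_mul_atBot_of_neg (sub_neg.2 (hi l hl))).2 tendsto_inv_nhdsGT_zero)
  have hsum : Tendsto (fun T => ∑ l, exp ((z l - z i) / T)) (𝓝[>] 0) (𝓝 1) := by
    simpa using tendsto_finsetSum Finset.univ fun l _ => hexp l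
  refine tendsto_pi_nhds.2 fun j => ?_
  have := ((hexp j).div hsum one_ne_zero).congr fun T => (hshift T j).symm
  rwa [div_one] at this

variable {Ω : Type*} [MeasurableSpace Ω] {P : Measure Ω}

lemma ae_exists_forall_lt [Nonempty ι] {Z : ι → Ω → ℝ}
    (hties : ∀ i j, i ≠ j → P {ω | Z i ω = Z j ω} = 0) :
    ∀ᵐ ω ∂P, ∃ i, ∀ j ≠ i, Z j ω < Z i ω := by
  have hnull : P (⋃ i, ⋃ j, ⋃ (_ : i ≠ j), {ω | Z i ω = Z j ω}) = 0 :=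
    measure_iUnion_null fun i => measure_iUnion_null fun j => measure_iUnion_null (hties i j)
  refine ae_iff.2 (measure_mono_null (fun ω hω => ?_) hnull)
  obtain ⟨i, -, hmax⟩ := Finset.exists_max_image Finset.univ (fun j => Z j ω) Finset.univ_nonempty
  push Not at hω
  obtain ⟨j, hji, hij⟩ := hω i
  simp only [mem_iUnion]
  exact ⟨i, j, hji.symm, le_antisymm hij (hmax j (Finset.mem_univ j))⟩

theorem tendsto_integral_temperedSoftmax [IsFiniteMeasure P] [DecidableEq ι] [Nonempty ι]
    {Z : ι → Ω → ℝ} (hZ : ∀ i, Measurable (Z i))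
    (hties : ∀ i j, i ≠ j → P {ω | Z i ω = Z j ω} = 0)
    {g : (ι → ℝ) → ℝ} (hg : Continuous g) {M : ℝ} (hM : ∀ v, |g v| ≤ M) :
    Tendsto (fun T => ∫ ω, g (temperedSoftmax (fun j => Z j ω) T) ∂P) (𝓝[>] 0)
      (𝓝 (∑ i, P.real {ω | ∀ j ≠ i, Z j ω < Z i ω} * g (Pi.single i 1))) := by
  set E : ι → Set Ω := fun i => {ω | ∀ j ≠ i, Z j ω < Z i ω}
  have hE (i : ι) : MeasurableSet (E i) := by
    simp only [E, ofPred_forall]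
    exact .iInter fun j => .iInter fun _ => measurableSet_lt (hZ j) (hZ i)
  set L : Ω → ℝ := fun ω => ∑ i, (E i).indicator (fun _ => g (Pi.single i 1)) ω
  have hL : ∫ ω, L ω ∂P = ∑ i, P.real (E i) * g (Pi.single i 1) := by
    rw [integral_finsetSum _ fun i _ => (integrable_const _).indicator (hE i)]
    simp only [integral_indicator_const _ (hE _), smul_eq_mul]
  have hlim : ∀ᵐ ω ∂P, Tendsto (fun T => g (temperedSoftmax (fun j => Z j ω) T)) (𝓝[>] 0)
      (𝓝 (L ω)) := by
    filter_upwards [ae_exists_forall_lt hties] with ω ⟨i, hi⟩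
    have hLω : L ω = g (Pi.single i 1) := by
      refine (Finset.sum_eq_single i (fun j _ hji => ?_) (by simp)).trans
        (indicator_of_mem (show ω ∈ E i from hi) _)
      exact indicator_of_notMem (fun hj => (hi j hji).not_gt ((hj : ω ∈ E j) i hji.symm)) _
    rw [hLω]
    exact (hg.tendsto _).comp (tendsto_temperedSoftmax_nhdsGT_zero hi)
  have hmeas (T : ℝ) : Measurable fun ω => temperedSoftmax (fun j => Z j ω) T := by
    unfold temperedSoftmax
    fun_prop
  rw [← hL]
  exact tendsto_integral_filter_of_dominated_convergence (fun _ => M)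
    (.of_forall fun T => (hg.measurable.comp (hmeas T)).aestronglyMeasurable)
    (.of_forall fun T => ae_of_all _ fun ω => (norm_eq_abs _).trans_le (hM _))
    (integrable_const M) hlim

end Softmax

/-- Gumbel-softmax convergence: with `ε₁, ..., ε_k` i.i.d. standard Gumbel and
`y_T(i) = exp((f_i + ε_i)/T) / Σ_j exp((f_j + ε_j)/T)`, as the temperature `T → 0⁺`
the random vector `y_T` converges in distribution to the one-hot vector `y` with
`P(y(i) = 1) = exp(f_i) / Σ_j exp(f_j)` — stated via convergence of expectations of
bounded continuous test functions. -/
theorem gumbel_softmax_convergence {Ω : Type*} [MeasurableSpace Ω]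
    (P : Measure Ω) [IsProbabilityMeasure P]
    {k : ℕ} (hk : 0 < k)
    (f : Fin k → ℝ)
    (ε : Fin k → Ω → ℝ) (hε_meas : ∀ i, Measurable (ε i))
    (hε_indep : iIndepFun ε P)
    (hε_gumbel : ∀ i x, P {ω | ε i ω ≤ x} = ENNReal.ofReal (Real.exp (-Real.exp (-x))))
    (yT : ℝ → Ω → Fin k → ℝ)
    (hyT : ∀ T ω i, yT T ω i =
      Real.exp ((f i + ε i ω) / T) / ∑ j, Real.exp ((f j + ε j ω) / T))
    (onehot : Fin k → Fin k → ℝ)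
    (h1hot : ∀ i j, onehot i j = if j = i then 1 else 0)
    (softmax : Fin k → ℝ)
    (hsm : ∀ i, softmax i = Real.exp (f i) / ∑ j, Real.exp (f j)) :
    ∀ g : (Fin k → ℝ) → ℝ, Continuous g → (∃ M, ∀ v, |g v| ≤ M) →
      Tendsto (fun T => ∫ ω, g (yT T ω) ∂P) (nhdsWithin 0 (Set.Ioi 0))
        (𝓝 (∑ i, softmax i * g (onehot i))) := by
  rintro g hg ⟨M, hM⟩
  have : Nonempty (Fin k) := ⟨⟨0, hk⟩⟩
  set Z : Fin k → Ω → ℝ := fun i ω => f i + ε i ω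
  have hZ (i : Fin k) : Measurable (Z i) := (hε_meas i).const_add (f i)
  have hind : iIndepFun Z P := hε_indep.comp _ fun i => measurable_const_add (f i)
  have hlaw (i : Fin k) : P.map (Z i) = gumbelMeasure (f i) :=
    map_add_eq_gumbelMeasure (hε_meas i) (hε_gumbel i) (f i)
  have hties (i j : Fin k) (hij : i ≠ j) : P {ω | Z i ω = Z j ω} = 0 := by
    have : NullSingletonClass (P.map (Z j)) := hlaw j ▸ inferInstance
    exact (hind.indepFun hij).measure_eq_eq_zero (hZ i) (hZ j)
  have hsoftmax (i : Fin k) : P.real {ω | ∀ j ≠ i, Z j ω < Z i ω} = softmax i := by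
    rw [measureReal_def, hind.measure_forall_lt_eq_of_gumbel hZ hlaw, hsm,
      ENNReal.toReal_ofReal (by positivity)]
  have hyT' : yT = fun T ω => temperedSoftmax (fun j => Z j ω) T := by
    ext T ω i
    exact hyT T ω i
  have honehot : onehot = fun i => Pi.single i 1 := by
    ext i j
    simp [h1hot, Pi.single_apply]
  simpa only [hyT', honehot, hsoftmax] using tendsto_integral_temperedSoftmax hZ hties hg hM
end
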